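/- For |q|<1 and ζ with |ζ|<1, ζ ≠ 1 (and denominators nonzero): ₂φ₁(q²,0;−q²;q²;ζ) = 1 + ζ/((1−ζ)(1+q²)) · R(ζ,−q²;q²), where R(α,β;Q) = Σ_{n≥0} (αβ)^n Q^{n²}/((αQ;Q)_n (βQ;Q)_n). -/

import Mathlib

open Complex

/-- The q-Pochhammer symbol `(a;q)_n = ∏_{j=0}^{n-1} (1 - a q^j)`. -/
noncomputable def qPoch (a q : ℂ) (n : ℕ) : ℂ := ∏ j ∈ Finset.range n, (1 - a * q ^ j)

/-- The universal mock theta function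
`R(α,β;Q) = Σ_{n≥0} (αβ)^n Q^{n²}/((αQ;Q)_n (βQ;Q)_n)`. -/
noncomputable def univR (α β Q : ℂ) : ℂ :=
  ∑' n : ℕ, (α * β) ^ n * Q ^ (n ^ 2) / (qPoch (α * Q) Q n * qPoch (β * Q) Q n)

/-!
Write `c_k(β) = β^k Q^(k²) / (β;Q)_{k+1}` (`rCoeff`) and `[m, k]_Q` for the Gaussian binomial
(`gaussBinom`). The `q`-binomial series `ζ^k / (ζ;Q)_{k+1} = Σ_m [m, k]_Q ζ^m` turns
`ζ / ((1-ζ)(1-β)) R(ζ,β;Q) = ζ Σ_k c_k(β) ζ^k / (ζ;Q)_{k+1}` into the double series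
`ζ Σ_{k,m} c_k(β) [m, k]_Q ζ^m`, absolutely convergent thanks to the factor `Q^(k²)`.
Summing over `k` first, the finite identity `Σ_{k ≤ m} c_k(β) [m, k]_Q = 1 / (β;Q)_{m+1}`
(induction on `m` via the Pascal rule, which relates `c(β)` to `c(βQ)`) leaves
`Σ_m ζ^(m+1) / (β;Q)_{m+1}`. For `Q = q²`, `β = -q²` the factor `(q²;q²)_n` of `₂φ₁` cancels.
-/

open Finset

section QPochhammer

variable {a q : ℂ}

@[simp] lemma qPoch_zero (a q : ℂ) : qPoch a q 0 = 1 := prod_range_zero _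

lemma qPoch_succ (a q : ℂ) (n : ℕ) : qPoch a q (n + 1) = qPoch a q n * (1 - a * q ^ n) :=
  prod_range_succ _ _

lemma qPoch_succ' (a q : ℂ) (n : ℕ) : qPoch a q (n + 1) = (1 - a) * qPoch (a * q) q n := by
  simp only [qPoch, prod_range_succ', pow_zero, mul_one, mul_assoc, ← pow_succ']
  exact mul_comm _ _

lemma one_sub_norm_pow_le_norm_qPoch (ha : ‖a‖ ≤ 1) (hq : ‖q‖ ≤ 1) (n : ℕ) :
    (1 - ‖a‖) ^ n ≤ ‖qPoch a q n‖ := by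
  rw [qPoch, norm_prod, pow_eq_prod_const]
  refine prod_le_prod (fun _ _ => sub_nonneg.mpr ha) fun j _ => ?_
  calc 1 - ‖a‖ ≤ ‖(1 : ℂ)‖ - ‖a * q ^ j‖ := by
        rw [norm_one, norm_mul, norm_pow]
        gcongr
        exact mul_le_of_le_one_right (norm_nonneg a) (pow_le_one₀ (norm_nonneg q) hq)
    _ ≤ ‖1 - a * q ^ j‖ := norm_sub_norm_le _ _

lemma qPoch_ne_zero (ha : ‖a‖ < 1) (hq : ‖q‖ ≤ 1) (n : ℕ) : qPoch a q n ≠ 0 :=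
  norm_pos_iff.mp <| (pow_pos (sub_pos.mpr ha) n).trans_le
    (one_sub_norm_pow_le_norm_qPoch ha.le hq n)

end QPochhammer

section GaussBinom

noncomputable def gaussBinom (Q : ℂ) : ℕ → ℕ → ℂ
  | _, 0 => 1
  | 0, _ + 1 => 0
  | m + 1, k + 1 => gaussBinom Q m k + Q ^ (k + 1) * gaussBinom Q m (k + 1)

variable {Q : ℂ}

@[simp] lemma gaussBinom_zero_right (Q : ℂ) (m : ℕ) : gaussBinom Q m 0 = 1 := by
  cases m <;> rfl

lemma gaussBinom_succ_succ (Q : ℂ) (m k : ℕ) :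
    gaussBinom Q (m + 1) (k + 1) = gaussBinom Q m k + Q ^ (k + 1) * gaussBinom Q m (k + 1) :=
  rfl

lemma gaussBinom_eq_zero_of_lt (Q : ℂ) : ∀ {m k : ℕ}, m < k → gaussBinom Q m k = 0
  | 0, _ + 1, _ => rfl
  | m + 1, k + 1, h => by
    rw [gaussBinom_succ_succ, gaussBinom_eq_zero_of_lt Q (by omega),
      gaussBinom_eq_zero_of_lt Q (by omega), mul_zero, add_zero]

lemma norm_gaussBinom_le_choose (hQ : ‖Q‖ ≤ 1) : ∀ m k : ℕ, ‖gaussBinom Q m k‖ ≤ m.choose k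
  | _, 0 => by simp
  | 0, _ + 1 => by simp [gaussBinom]
  | m + 1, k + 1 => by
    rw [gaussBinom_succ_succ, Nat.choose_succ_succ, Nat.cast_add]
    refine (norm_add_le _ _).trans (add_le_add (norm_gaussBinom_le_choose hQ m k) ?_)
    rw [norm_mul, norm_pow]
    exact (mul_le_of_le_one_left (norm_nonneg _) (pow_le_one₀ (norm_nonneg Q) hQ)).trans
      (norm_gaussBinom_le_choose hQ m (k + 1))

lemma sum_range_mul_gaussBinom_succ (f : ℕ → ℂ) (m : ℕ) :
    ∑ k ∈ range (m + 2), f k * gaussBinom Q (m + 1) k =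
      ∑ k ∈ range (m + 1), (Q ^ k * f k + f (k + 1)) * gaussBinom Q m k := by
  have hshift : ∑ k ∈ range (m + 1), Q ^ k * f k * gaussBinom Q m k =
      f 0 + ∑ k ∈ range (m + 1), f (k + 1) * (Q ^ (k + 1) * gaussBinom Q m (k + 1)) := by
    rw [sum_range_succ' _ m, sum_range_succ _ m, gaussBinom_eq_zero_of_lt Q (Nat.lt_succ_self m)]
    simp only [pow_zero, one_mul, gaussBinom_zero_right, mul_one, mul_zero, add_zero]
    ring_nf
  rw [sum_range_succ' _ (m + 1)]
  simp only [gaussBinom_succ_succ, gaussBinom_zero_right, mul_add, add_mul, sum_add_distrib, hshift]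
  ring

end GaussBinom

section FiniteIdentity

noncomputable def rCoeff (β Q : ℂ) (k : ℕ) : ℂ := β ^ k * Q ^ (k ^ 2) / qPoch β Q (k + 1)

variable {Q : ℂ}

lemma pow_mul_rCoeff_add_rCoeff_succ {β : ℂ} (hβ : ∀ n, qPoch β Q n ≠ 0) (k : ℕ) :
    Q ^ k * rCoeff β Q k + rCoeff β Q (k + 1) = 1 / (1 - β) * rCoeff (β * Q) Q k := by
  have h := hβ (k + 2)
  rw [qPoch_succ', qPoch_succ] at h
  simp only [rCoeff]
  rw [qPoch_succ', qPoch_succ' β Q (k + 1), qPoch_succ (β * Q) Q k]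
  -- keep the factor `1 - βQ^(k+1)` atomic, so that `field_simp` sees it is nonzero
  set r := 1 - β * Q * Q ^ k with hr
  obtain ⟨hβ1, hP, hr0⟩ := mul_ne_zero_iff.mp h |>.imp_right mul_ne_zero_iff.mp
  field_simp
  rw [hr]
  ring

lemma sum_range_rCoeff_mul_gaussBinom (m : ℕ) : ∀ {β : ℂ}, (∀ n, qPoch β Q n ≠ 0) →
    ∑ k ∈ range (m + 1), rCoeff β Q k * gaussBinom Q m k = 1 / qPoch β Q (m + 1) := by
  induction m with
  | zero => intro β _; simp [rCoeff]
  | succ m ih =>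
    intro β hβ
    have hβQ : ∀ n, qPoch (β * Q) Q n ≠ 0 := fun n =>
      right_ne_zero_of_mul (qPoch_succ' β Q n ▸ hβ (n + 1))
    rw [sum_range_mul_gaussBinom_succ]
    simp only [pow_mul_rCoeff_add_rCoeff_succ hβ, mul_assoc, ← mul_sum]
    rw [ih hβQ, qPoch_succ' β Q (m + 1), one_div_mul_one_div]

end FiniteIdentity

section Series

lemma hasSum_choose_mul_pow {x : ℝ} (hx : |x| < 1) (k : ℕ) :
    HasSum (fun m => (m.choose k : ℝ) * x ^ m) (x ^ k / (1 - x) ^ (k + 1)) := by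
  rw [← hasSum_nat_add_iff' k]
  have hlow : ∑ i ∈ range k, (i.choose k : ℝ) * x ^ i = 0 :=
    sum_eq_zero fun i hi => by
      rw [Nat.choose_eq_zero_of_lt (mem_range.mp hi), Nat.cast_zero, zero_mul]
  rw [hlow, sub_zero]
  have h := (hasSum_choose_mul_geometric_of_norm_lt_one k hx).mul_left (x ^ k)
  rw [mul_one_div] at h
  exact h.congr_fun fun n => by rw [pow_add]; ring

lemma summable_pow_sq_mul_pow {r : ℝ} (hr : |r| < 1) (y : ℝ) :
    Summable fun k : ℕ => r ^ (k ^ 2) * y ^ k := by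
  have hsmall : ∀ᶠ k : ℕ in Filter.atTop, ‖r ^ k * y‖ ≤ 1 / 2 := by
    have h := (tendsto_pow_atTop_nhds_zero_of_abs_lt_one hr).mul_const y
    rw [zero_mul] at h
    exact (h.norm.eventually_le_const (by norm_num : ‖(0 : ℝ)‖ < 1 / 2)).mono
      fun k hk => by simpa using hk
  refine summable_geometric_two.of_norm_bounded_eventually_nat (hsmall.mono fun k hk => ?_)
  rw [sq, pow_mul, ← mul_pow, norm_pow]
  exact pow_le_pow_left₀ (norm_nonneg _) hk k

variable {Q β ζ : ℂ}

lemma summable_gaussBinom_mul_pow (hQ : ‖Q‖ ≤ 1) (hζ : ‖ζ‖ < 1) (k : ℕ) :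
    Summable fun m => gaussBinom Q m k * ζ ^ m := by
  refine (hasSum_choose_mul_pow (abs_norm ζ ▸ hζ) k).summable.of_norm_bounded fun m => ?_
  rw [norm_mul, norm_pow]
  exact mul_le_mul_of_nonneg_right (norm_gaussBinom_le_choose hQ m k) (by positivity)

lemma hasSum_gaussBinom_mul_pow (hQ : ‖Q‖ ≤ 1) (hζ : ‖ζ‖ < 1) (k : ℕ) :
    HasSum (fun m => gaussBinom Q m k * ζ ^ m) (ζ ^ k / qPoch ζ Q (k + 1)) := by
  induction k with
  | zero =>
    simpa [qPoch_succ] using hasSum_geometric_of_norm_lt_one hζ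
  | succ k ih =>
    obtain ⟨S, hS⟩ := summable_gaussBinom_mul_pow hQ hζ (k + 1)
    have hshift : HasSum (fun m => gaussBinom Q (m + 1) (k + 1) * ζ ^ (m + 1))
        (ζ * (ζ ^ k / qPoch ζ Q (k + 1)) + Q ^ (k + 1) * ζ * S) := by
      refine ((ih.mul_left ζ).add (hS.mul_left (Q ^ (k + 1) * ζ))).congr_fun fun m => ?_
      rw [gaussBinom_succ_succ]
      ring
    have hrec : S = ζ * (ζ ^ k / qPoch ζ Q (k + 1)) + Q ^ (k + 1) * ζ * S := by
      simpa [gaussBinom_eq_zero_of_lt] using ((hasSum_nat_add_iff' 1).mpr hS).unique hshift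
    have hne := qPoch_ne_zero hζ hQ (k + 2)
    rw [qPoch_succ] at hne
    obtain ⟨hP, hlast⟩ := mul_ne_zero_iff.mp hne
    convert hS using 1
    rw [qPoch_succ, eq_comm, eq_div_iff hne]
    field_simp at hrec
    linear_combination hrec

lemma summable_rCoeff_mul_gaussBinom_mul_pow (hQ : ‖Q‖ < 1) (hβ : ‖β‖ < 1) (hζ : ‖ζ‖ < 1) :
    Summable fun p : ℕ × ℕ => rCoeff β Q p.1 * (gaussBinom Q p.2 p.1 * ζ ^ p.2) := by
  have hb : 0 < 1 - ‖β‖ := sub_pos.mpr hβ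
  have hchoose := hasSum_choose_mul_pow (abs_norm ζ ▸ hζ)
  have hmajor : Summable fun p : ℕ × ℕ => ‖β‖ ^ p.1 * ‖Q‖ ^ (p.1 ^ 2) / (1 - ‖β‖) ^ (p.1 + 1) *
      ((p.2.choose p.1 : ℝ) * ‖ζ‖ ^ p.2) := by
    refine (summable_prod_of_nonneg fun p =>
      mul_nonneg (div_nonneg (by positivity) (pow_nonneg hb.le _)) (by positivity)).mpr
      ⟨fun k => ?_, ?_⟩
    · exact (hchoose k).summable.mul_left (‖β‖ ^ k * ‖Q‖ ^ (k ^ 2) / (1 - ‖β‖) ^ (k + 1))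
    simp only [tsum_mul_left, (hchoose _).tsum_eq]
    refine ((summable_pow_sq_mul_pow (abs_norm Q ▸ hQ)
      (‖β‖ * ‖ζ‖ / ((1 - ‖β‖) * (1 - ‖ζ‖)))).mul_left (1 / ((1 - ‖β‖) * (1 - ‖ζ‖)))).congr
      fun k => ?_
    simp only [div_eq_mul_inv, mul_inv, mul_pow, inv_pow, pow_succ]
    ring
  refine hmajor.of_norm_bounded fun p => ?_
  simp only [rCoeff, norm_mul, norm_div, norm_pow]
  gcongr
  · exact one_sub_norm_pow_le_norm_qPoch hβ.le hQ.le _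
  · exact norm_gaussBinom_le_choose hQ.le _ _

end Series

section Main

variable {Q β ζ : ℂ}

lemma tsum_rCoeff_mul_gaussBinom_mul_pow (hQ : ‖Q‖ < 1) (hβ : ‖β‖ < 1) (m : ℕ) :
    ∑' k, rCoeff β Q k * (gaussBinom Q m k * ζ ^ m) = ζ ^ m / qPoch β Q (m + 1) := by
  rw [tsum_eq_sum (s := range (m + 1)) fun k hk => by
    rw [gaussBinom_eq_zero_of_lt Q (by simpa using hk), zero_mul, mul_zero]]
  simp only [← mul_assoc, ← sum_mul]
  rw [sum_range_rCoeff_mul_gaussBinom m (qPoch_ne_zero hβ hQ.le), one_div_mul_eq_div]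

lemma rCoeff_mul_pow_div_qPoch (k : ℕ) :
    rCoeff β Q k * (ζ ^ k / qPoch ζ Q (k + 1)) = 1 / ((1 - ζ) * (1 - β)) *
      ((ζ * β) ^ k * Q ^ (k ^ 2) / (qPoch (ζ * Q) Q k * qPoch (β * Q) Q k)) := by
  simp only [rCoeff, qPoch_succ', div_eq_mul_inv, mul_inv]
  ring

theorem tsum_pow_div_qPoch_eq_univR (hQ : ‖Q‖ < 1) (hβ : ‖β‖ < 1) (hζ : ‖ζ‖ < 1) :
    ∑' m, ζ ^ m / qPoch β Q m = 1 + ζ / ((1 - ζ) * (1 - β)) * univR ζ β Q := by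
  have hsum := summable_rCoeff_mul_gaussBinom_mul_pow hQ hβ hζ
  have hcol := tsum_rCoeff_mul_gaussBinom_mul_pow (ζ := ζ) hQ hβ
  have hrow : ∀ k, ∑' m, rCoeff β Q k * (gaussBinom Q m k * ζ ^ m) =
      1 / ((1 - ζ) * (1 - β)) *
        ((ζ * β) ^ k * Q ^ (k ^ 2) / (qPoch (ζ * Q) Q k * qPoch (β * Q) Q k)) := fun k => by
    rw [tsum_mul_left, (hasSum_gaussBinom_mul_pow hQ.le hζ k).tsum_eq, rCoeff_mul_pow_div_qPoch]
  have hsumm : Summable fun m => ζ ^ m / qPoch β Q m := by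
    refine (summable_nat_add_iff 1).mp ((hsum.prod_symm.prod.mul_left ζ).congr fun m => ?_)
    simp only [Prod.swap, hcol]
    ring
  calc ∑' m, ζ ^ m / qPoch β Q m
      = 1 + ζ * ∑' m, ∑' k, rCoeff β Q k * (gaussBinom Q m k * ζ ^ m) := by
        rw [hsumm.tsum_eq_zero_add, ← tsum_mul_left]
        simp only [hcol, pow_zero, qPoch_zero, div_one, pow_succ']
        ring_nf
    _ = 1 + ζ / ((1 - ζ) * (1 - β)) * univR ζ β Q := by
        rw [Summable.tsum_comm (f := fun k m => rCoeff β Q k * (gaussBinom Q m k * ζ ^ m)) hsum,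
          tsum_congr hrow, tsum_mul_left, univR]
        ring

end Main

theorem twoPhiOne_eq_R_neg_qsq_general (q ζ : ℂ) (hq1 : ‖q‖ < 1) (hζ : ‖ζ‖ < 1) :
    ∑' n : ℕ, qPoch (q ^ 2) (q ^ 2) n /
        (qPoch (-q ^ 2) (q ^ 2) n * qPoch (q ^ 2) (q ^ 2) n) * ζ ^ n
      = 1 + ζ / ((1 - ζ) * (1 + q ^ 2)) * univR ζ (-q ^ 2) (q ^ 2) := by
  have hQ : ‖q ^ 2‖ < 1 := by
    rw [norm_pow]
    exact pow_lt_one₀ (norm_nonneg q) hq1 two_ne_zero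
  have hcancel : ∀ n, qPoch (q ^ 2) (q ^ 2) n /
      (qPoch (-q ^ 2) (q ^ 2) n * qPoch (q ^ 2) (q ^ 2) n) * ζ ^ n =
        ζ ^ n / qPoch (-q ^ 2) (q ^ 2) n := fun n => by
    rw [mul_comm (qPoch (-q ^ 2) _ n), div_mul_cancel_left₀ (qPoch_ne_zero hQ hQ.le n),
      inv_mul_eq_div]
  rw [tsum_congr hcancel, tsum_pow_div_qPoch_eq_univR hQ (by rwa [norm_neg]) hζ, sub_neg_eq_add]

/-- `₂φ₁(q²,0;−q²;q²;ζ) = 1 + ζ/((1−ζ)(1+q²)) · R(ζ,−q²;q²)`. -/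
theorem twoPhiOne_eq_R_neg_qsq (q ζ : ℂ) (hq0 : 0 < ‖q‖) (hq1 : ‖q‖ < 1)
    (hζ : ‖ζ‖ < 1) (hζ1 : ζ ≠ 1) (hζq : ∀ m : ℕ, ζ * q ^ (2 * m) ≠ 1) :
    ∑' n : ℕ, qPoch (q ^ 2) (q ^ 2) n /
        (qPoch (-q ^ 2) (q ^ 2) n * qPoch (q ^ 2) (q ^ 2) n) * ζ ^ n
      = 1 + ζ / ((1 - ζ) * (1 + q ^ 2)) * univR ζ (-q ^ 2) (q ^ 2) :=
  twoPhiOne_eq_R_neg_qsq_general q ζ hq1 hζ
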